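/- Under the assumptions of the previous statement and additionally assuming that $f$ is Lipschitz with constant $L_f$, that $x\mapsto W(x,y)$ is Lipschitz with constant $L_W$ for every $y$, and that $\mathrm{diam}(\chi)\leq 1$, the one-layer continuous MPNN output $f^{(1)}(x)=\Psi(f(x), \int_\chi \frac{W(x,y)}{d_W(x)}\Phi(f(x),f(y))\,d\mathbb{P}(y))$ is Lipschitz with constant at most $L_\Psi\frac{L_W}{d_{\min}}(\|\Phi(0,0)\|_\infty + 2L_\Phi\|f\|_\infty) + L_\Psi(1 + \frac{\|W\|_\infty}{d_{\min}}L_\Phi)L_f + L_\Psi\|W\|_\infty(\|\Phi(0,0)\|_\infty + 2L_\Phi\|f\|_\infty)\frac{L_W}{d_{\min}^2}$. -/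

import Mathlib

/-!
Split the aggregation difference at `y` as
`(w x y - w x' y) • Φ(f x, f y) + w x' y • (Φ(f x, f y) - Φ(f x', f y))`, where
`w x y = W x y / d_W x` is the normalised weight. Since the degree is `L_W`-Lipschitz and bounded
below by `d_min`, `w · y` is `(L_W / d_min + ‖W‖_∞ L_W / d_min²)`-Lipschitz and bounded by
`‖W‖_∞ / d_min`; with `‖Φ(f x, f y)‖ ≤ ‖Φ(0,0)‖ + 2 L_Φ ‖f‖_∞`, the aggregation is Lipschitz
after integrating against the probability measure, and composing with `Ψ` gives the bound.
-/

open MeasureTheory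

theorem abs_div_sub_div_le {a a' b b' m M ε δ : ℝ} (hm : 0 < m) (hb : m ≤ b) (hb' : m ≤ b')
    (ha' : |a'| ≤ M) (ha : |a - a'| ≤ ε) (hbb : |b - b'| ≤ δ) :
    |a / b - a' / b'| ≤ ε / m + M * δ / m ^ 2 := by
  have hb0 : 0 < b := hm.trans_le hb
  have hb'0 : 0 < b' := hm.trans_le hb'
  have hsplit : a / b - a' / b' = (a - a') / b + a' * (b' - b) / (b * b') := by
    field_simp
    ring
  rw [hsplit]
  refine (abs_add_le _ _).trans (add_le_add ?_ ?_)
  · rw [abs_div, abs_of_pos hb0]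
    exact div_le_div₀ ((abs_nonneg _).trans ha) ha hm hb
  · rw [abs_div, abs_mul, abs_of_pos (mul_pos hb0 hb'0), abs_sub_comm, sq]
    exact div_le_div₀ (mul_nonneg ((abs_nonneg _).trans ha') ((abs_nonneg _).trans hbb))
      (mul_le_mul ha' hbb (abs_nonneg _) ((abs_nonneg _).trans ha')) (mul_pos hm hm)
      (mul_le_mul hb hb' hm.le hb0.le)

theorem norm_smul_sub_smul_le {E : Type*} [SeminormedAddCommGroup E] [NormedSpace ℝ E]
    (r r' : ℝ) (u u' : E) : ‖r • u - r' • u'‖ ≤ |r - r'| * ‖u‖ + |r'| * ‖u - u'‖ := by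
  have hsplit : r • u - r' • u' = (r - r') • u + r' • (u - u') := by
    rw [sub_smul, smul_sub]; abel
  rw [hsplit, ← Real.norm_eq_abs, ← Real.norm_eq_abs, ← norm_smul, ← norm_smul]
  exact norm_add_le _ _

theorem LipschitzWith.norm_le_norm_zero_add_mul {E F : Type*} [SeminormedAddCommGroup E]
    [SeminormedAddCommGroup F] {K : NNReal} {g : E → F} (hg : LipschitzWith K g) (x : E) :
    ‖g x‖ ≤ ‖g 0‖ + K * ‖x‖ := by
  have h := hg.dist_le_mul x 0
  rw [dist_eq_norm, dist_zero_right] at h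
  calc ‖g x‖ ≤ ‖g 0‖ + ‖g x - g 0‖ := norm_le_insert' _ _
    _ ≤ ‖g 0‖ + K * ‖x‖ := by gcongr

section Integral

variable {α E : Type*} [MeasurableSpace α] [NormedAddCommGroup E] [NormedSpace ℝ E]
  {μ : Measure α} [IsProbabilityMeasure μ]

theorem dist_integral_le_of_forall_dist_le {g h : α → E} (hg : Integrable g μ)
    (hh : Integrable h μ) {C : ℝ} (hC : ∀ y, dist (g y) (h y) ≤ C) :
    dist (∫ y, g y ∂μ) (∫ y, h y ∂μ) ≤ C := by
  rw [dist_eq_norm, ← integral_sub hg hh]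
  simpa using norm_integral_le_of_norm_le_const (μ := μ)
    (ae_of_all _ fun y => (dist_eq_norm (g y) (h y)).symm.trans_le (hC y))

theorem LipschitzWith.integral {χ : Type*} [PseudoMetricSpace χ] {K : NNReal} {g : χ → α → E}
    (hint : ∀ x, Integrable (g x) μ) (hg : ∀ y, LipschitzWith K fun x => g x y) :
    LipschitzWith K fun x => ∫ y, g x y ∂μ :=
  LipschitzWith.of_dist_le_mul fun x x' =>
    dist_integral_le_of_forall_dist_le (hint x) (hint x') fun y => (hg y).dist_le_mul x x'

theorem dist_integral_degree_normalized_smul_le {χ : Type*} [PseudoMetricSpace χ]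
    {W : χ → α → ℝ} {g : χ → α → E} {K Lg : NNReal} {Wmax dmin B : ℝ} (hdmin : 0 < dmin)
    (hW0 : ∀ x y, 0 ≤ W x y) (hWb : ∀ x y, W x y ≤ Wmax) (hWmeas : ∀ x, Measurable (W x))
    (hWlip : ∀ y, LipschitzWith K fun x => W x y) (hdeg : ∀ x, dmin ≤ ∫ y, W x y ∂μ)
    (hgb : ∀ x y, ‖g x y‖ ≤ B) (hgmeas : ∀ x, AEStronglyMeasurable (g x) μ)
    (hglip : ∀ y, LipschitzWith Lg fun x => g x y) (x x' : χ) :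
    dist (∫ y, (W x y / ∫ y', W x y' ∂μ) • g x y ∂μ)
        (∫ y, (W x' y / ∫ y', W x' y' ∂μ) • g x' y ∂μ)
      ≤ ((K / dmin + Wmax * K / dmin ^ 2) * B + Wmax / dmin * Lg) * dist x x' := by
  have hWint : ∀ x, Integrable (W x) μ := fun x =>
    Integrable.of_bound (hWmeas x).aestronglyMeasurable Wmax
      (ae_of_all _ fun y => by rw [Real.norm_eq_abs, abs_of_nonneg (hW0 x y)]; exact hWb x y)
  have hdeg_lip := LipschitzWith.integral hWint hWlip
  have hweight : ∀ x y, |W x y / ∫ y', W x y' ∂μ| ≤ Wmax / dmin := fun x y => by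
    rw [abs_of_nonneg (div_nonneg (hW0 x y) (hdmin.le.trans (hdeg x)))]
    exact div_le_div₀ ((hW0 x y).trans (hWb x y)) (hWb x y) hdmin (hdeg x)
  have hint : ∀ x, Integrable (fun y => (W x y / ∫ y', W x y' ∂μ) • g x y) μ := fun x =>
    Integrable.of_bound (((hWmeas x).div_const _).aestronglyMeasurable.smul (hgmeas x))
      (Wmax / dmin * B) (ae_of_all _ fun y => by
        rw [norm_smul, Real.norm_eq_abs]
        exact mul_le_mul (hweight x y) (hgb x y) (norm_nonneg _)
          (div_nonneg ((hW0 x y).trans (hWb x y)) hdmin.le))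
  refine dist_integral_le_of_forall_dist_le (hint x) (hint x') fun y => ?_
  have hWmax : 0 ≤ Wmax := (hW0 x y).trans (hWb x y)
  have hΔweight : |W x y / ∫ y', W x y' ∂μ - W x' y / ∫ y', W x' y' ∂μ|
      ≤ K * dist x x' / dmin + Wmax * (K * dist x x') / dmin ^ 2 :=
    abs_div_sub_div_le hdmin (hdeg x) (hdeg x') ((abs_of_nonneg (hW0 x' y)).trans_le (hWb x' y))
      ((hWlip y).dist_le_mul x x') (hdeg_lip.dist_le_mul x x')
  rw [dist_eq_norm]
  calc _ ≤ _ := norm_smul_sub_smul_le _ _ _ _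
    _ ≤ (K * dist x x' / dmin + Wmax * (K * dist x x') / dmin ^ 2) * B
          + Wmax / dmin * (Lg * dist x x') := by
        gcongr
        · exact hgb x y
        · exact hweight x' y
        · rw [← dist_eq_norm]; exact (hglip y).dist_le_mul x x'
    _ = ((K / dmin + Wmax * K / dmin ^ 2) * B + Wmax / dmin * Lg) * dist x x' := by ring

end Integral

theorem stmt_7_general {χ : Type*} [MetricSpace χ] [MeasurableSpace χ]
    (P : Measure χ) [IsProbabilityMeasure P]
    (F H F1 : ℕ) (W : χ → χ → ℝ) (Wmax LW dmin : ℝ)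
    (hLW : 0 ≤ LW) (hdmin : 0 < dmin)
    (hW0 : ∀ x y, 0 ≤ W x y) (hWb : ∀ x y, W x y ≤ Wmax)
    (hWmeas : ∀ x, Measurable (W x))
    (hWlip : ∀ y, LipschitzWith (Real.toNNReal LW) (fun x => W x y))
    (hdeg : ∀ x, dmin ≤ ∫ y, W x y ∂P)
    (Φ : (Fin F → ℝ) → (Fin F → ℝ) → (Fin H → ℝ)) (LΦ : NNReal)
    (hΦ : LipschitzWith LΦ (fun q : (Fin F → ℝ) × (Fin F → ℝ) => Φ q.1 q.2))
    (Ψ : (Fin F → ℝ) → (Fin H → ℝ) → (Fin F1 → ℝ)) (LΨ : NNReal)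
    (hΨ : LipschitzWith LΨ (fun q : (Fin F → ℝ) × (Fin H → ℝ) => Ψ q.1 q.2))
    (f : χ → (Fin F → ℝ)) (hfmeas : Measurable f)
    (Mf : ℝ) (hfb : ∀ x, ‖f x‖ ≤ Mf)
    (Lf : NNReal) (hflip : LipschitzWith Lf f) :
    ∀ x x' : χ,
      ‖Ψ (f x) (∫ y, (W x y / (∫ y', W x y' ∂P)) • Φ (f x) (f y) ∂P)
        - Ψ (f x') (∫ y, (W x' y / (∫ y', W x' y' ∂P)) • Φ (f x') (f y) ∂P)‖
      ≤ ((LΨ : ℝ) * (LW / dmin) * (‖Φ 0 0‖ + 2 * LΦ * Mf)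
          + (LΨ : ℝ) * (1 + Wmax / dmin * LΦ) * Lf
          + (LΨ : ℝ) * Wmax * (‖Φ 0 0‖ + 2 * LΦ * Mf) * (LW / dmin ^ 2)) * dist x x' := by
  intro x x'
  have hΦb : ∀ z y, ‖Φ (f z) (f y)‖ ≤ ‖Φ 0 0‖ + 2 * LΦ * Mf := fun z y => by
    have hMf : 0 ≤ Mf := (norm_nonneg _).trans (hfb z)
    have hpair : ‖(f z, f y)‖ ≤ 2 * Mf := by
      rw [Prod.norm_def, max_le_iff]; constructor <;> linarith [hfb z, hfb y]
    calc ‖Φ (f z) (f y)‖ ≤ ‖Φ 0 0‖ + LΦ * ‖(f z, f y)‖ := hΦ.norm_le_norm_zero_add_mul (f z, f y)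
      _ ≤ ‖Φ 0 0‖ + LΦ * (2 * Mf) := by gcongr
      _ = ‖Φ 0 0‖ + 2 * LΦ * Mf := by ring
  have hΦlip : ∀ y, LipschitzWith (LΦ * Lf) fun z => Φ (f z) (f y) := fun y => by
    have h := (hΦ.comp (LipschitzWith.prodMk_right (f y))).comp hflip
    rwa [mul_one] at h
  have hagg := dist_integral_degree_normalized_smul_le hdmin hW0 hWb hWmeas hWlip hdeg hΦb
    (fun z => ((hΦ.continuous.comp (continuous_const.prodMk continuous_id)).measurable.comp
      hfmeas).aestronglyMeasurable) hΦlip x x'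
  rw [Real.coe_toNNReal LW hLW] at hagg
  rw [← dist_eq_norm]
  refine (hΨ.dist_le_mul (f x, _) (f x', _)).trans ?_
  rw [Prod.dist_eq]
  calc _ ≤ (LΨ : ℝ) * (Lf * dist x x' + ((LW / dmin + Wmax * LW / dmin ^ 2)
          * (‖Φ 0 0‖ + 2 * LΦ * Mf) + Wmax / dmin * ↑(LΦ * Lf)) * dist x x') := by
        gcongr
        refine max_le ((hflip.dist_le_mul x x').trans (le_add_of_nonneg_right ?_))
          (hagg.trans (le_add_of_nonneg_left (by positivity)))
        exact dist_nonneg.trans hagg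
    _ = _ := by push_cast; ring

/-- Lipschitz bound for one layer of a continuous MPNN with mean aggregation. -/
theorem stmt_7 {χ : Type*} [MetricSpace χ] [MeasurableSpace χ] [BorelSpace χ]
    (P : Measure χ) [IsProbabilityMeasure P]
    (F H F1 : ℕ) (W : χ → χ → ℝ) (Wmax LW dmin : ℝ)
    (hLW : 0 ≤ LW) (hdmin : 0 < dmin)
    (hdiam : ∀ x x' : χ, dist x x' ≤ 1)
    (hW0 : ∀ x y, 0 ≤ W x y) (hWb : ∀ x y, W x y ≤ Wmax)
    (hWmeas : ∀ x, Measurable (W x))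
    (hWlip : ∀ y, LipschitzWith (Real.toNNReal LW) (fun x => W x y))
    (hdeg : ∀ x, dmin ≤ ∫ y, W x y ∂P)
    (Φ : (Fin F → ℝ) → (Fin F → ℝ) → (Fin H → ℝ)) (LΦ : NNReal)
    (hΦ : LipschitzWith LΦ (fun q : (Fin F → ℝ) × (Fin F → ℝ) => Φ q.1 q.2))
    (Ψ : (Fin F → ℝ) → (Fin H → ℝ) → (Fin F1 → ℝ)) (LΨ : NNReal)
    (hΨ : LipschitzWith LΨ (fun q : (Fin F → ℝ) × (Fin H → ℝ) => Ψ q.1 q.2))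
    (f : χ → (Fin F → ℝ)) (hfmeas : Measurable f)
    (Mf : ℝ) (hfb : ∀ x, ‖f x‖ ≤ Mf)
    (Lf : NNReal) (hflip : LipschitzWith Lf f) :
    ∀ x x' : χ,
      ‖Ψ (f x) (∫ y, (W x y / (∫ y', W x y' ∂P)) • Φ (f x) (f y) ∂P)
        - Ψ (f x') (∫ y, (W x' y / (∫ y', W x' y' ∂P)) • Φ (f x') (f y) ∂P)‖
      ≤ ((LΨ : ℝ) * (LW / dmin) * (‖Φ 0 0‖ + 2 * LΦ * Mf)
          + (LΨ : ℝ) * (1 + Wmax / dmin * LΦ) * Lf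
          + (LΨ : ℝ) * Wmax * (‖Φ 0 0‖ + 2 * LΦ * Mf) * (LW / dmin ^ 2)) * dist x x' :=
  stmt_7_general P F H F1 W Wmax LW dmin hLW hdmin hW0 hWb hWmeas hWlip hdeg Φ LΦ hΦ Ψ LΨ hΨ f
    hfmeas Mf hfb Lf hflip
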